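/- For eligible tenacity t, assuming every vertex of tenacity at most t has a unique base, the set of blossoms of tenacity at most t forms a laminar family: any two such blossoms are either disjoint or one contains the other. -/

import Mathlib

open scoped Classical

universe u

variable {V : Type u}

/-- A finite-or-infinite undirected graph together with a matching. -/
structure MatchedGraph (V : Type u) where
  adj : V → V → Prop
  symm : ∀ u v, adj u v → adj v u
  loopless : ∀ v, ¬ adj v v
  M : V → V → Prop
  M_symm : ∀ u v, M u v → M v u
  M_sub : ∀ u v, M u v → adj u v
  M_matching : ∀ u v w, M u v → M u w → v = w

namespace MatchedGraph

/-- A vertex is unmatched if no matched edge is incident to it. -/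
def unmatched (g : MatchedGraph V) (v : V) : Prop := ∀ u, ¬ g.M v u

/-- `p` is a simple alternating path starting at `b` and ending at `v`,
whose first edge is unmatched and whose edges alternate unmatched/matched.
(The `i`-th edge is matched iff `i` is odd.) -/
def AltPath (g : MatchedGraph V) (p : List V) (b v : V) : Prop :=
  p.head? = some b ∧ p.getLast? = some v ∧ p.Nodup ∧
  ∀ i, i + 1 < p.length →
    g.adj (p.getD i b) (p.getD (i + 1) b) ∧
      (g.M (p.getD i b) (p.getD (i + 1) b) ↔ i % 2 = 1)

/-- An alternating path from an *unmatched* vertex `f` to `v`. -/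
def AltPathFrom (g : MatchedGraph V) (p : List V) (f v : V) : Prop :=
  g.unmatched f ∧ g.AltPath p f v

/-- Minimum length of an even alternating path from an unmatched vertex to `v`. -/
noncomputable def evenlevel (g : MatchedGraph V) (v : V) : ℕ∞ :=
  sInf {n : ℕ∞ | ∃ p f, g.AltPathFrom p f v ∧ Even (p.length - 1) ∧
    n = ((p.length - 1 : ℕ) : ℕ∞)}

/-- Minimum length of an odd alternating path from an unmatched vertex to `v`. -/
noncomputable def oddlevel (g : MatchedGraph V) (v : V) : ℕ∞ :=
  sInf {n : ℕ∞ | ∃ p f, g.AltPathFrom p f v ∧ Odd (p.length - 1) ∧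
    n = ((p.length - 1 : ℕ) : ℕ∞)}

noncomputable def tenacity (g : MatchedGraph V) (v : V) : ℕ∞ :=
  g.evenlevel v + g.oddlevel v

noncomputable def minlevel (g : MatchedGraph V) (v : V) : ℕ∞ :=
  min (g.evenlevel v) (g.oddlevel v)

noncomputable def maxlevel (g : MatchedGraph V) (v : V) : ℕ∞ :=
  max (g.evenlevel v) (g.oddlevel v)

/-- Minimum length of an augmenting path: an alternating path between two
distinct unmatched vertices. -/
noncomputable def lm (g : MatchedGraph V) : ℕ∞ :=
  sInf {n : ℕ∞ | ∃ p f v, g.AltPathFrom p f v ∧ g.unmatched v ∧ f ≠ v ∧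
    n = ((p.length - 1 : ℕ) : ℕ∞)}

/-- Minimum tenacity of any vertex. -/
noncomputable def tm (g : MatchedGraph V) : ℕ∞ := ⨅ v, g.tenacity v

/-- `p` is an `evenlevel(v)` path starting at the unmatched vertex `f`. -/
def IsEvenlevelPath (g : MatchedGraph V) (p : List V) (f v : V) : Prop :=
  g.AltPathFrom p f v ∧ Even (p.length - 1) ∧
    ((p.length - 1 : ℕ) : ℕ∞) = g.evenlevel v

/-- `p` is an `oddlevel(v)` path starting at the unmatched vertex `f`. -/
def IsOddlevelPath (g : MatchedGraph V) (p : List V) (f v : V) : Prop :=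
  g.AltPathFrom p f v ∧ Odd (p.length - 1) ∧
    ((p.length - 1 : ℕ) : ℕ∞) = g.oddlevel v

/-- `p` is a `minlevel(v)` path starting at the unmatched vertex `f`. -/
def IsMinlevelPath (g : MatchedGraph V) (p : List V) (f v : V) : Prop :=
  g.AltPathFrom p f v ∧ ((p.length - 1 : ℕ) : ℕ∞) = g.minlevel v

/-- `p` is a `maxlevel(v)` path starting at the unmatched vertex `f`. -/
def IsMaxlevelPath (g : MatchedGraph V) (p : List V) (f v : V) : Prop :=
  g.AltPathFrom p f v ∧ ((p.length - 1 : ℕ) : ℕ∞) = g.maxlevel v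

/-- The vertex at position `i` of `p` (whose prefix from `f` has length `i`)
is BFS-honest w.r.t. `p`. -/
def BFSHonest (g : MatchedGraph V) (p : List V) (f : V) (i : ℕ) : Prop :=
  (Even i → g.evenlevel (p.getD i f) = (i : ℕ∞)) ∧
  (Odd i → g.oddlevel (p.getD i f) = (i : ℕ∞))

/-- `u` is a predecessor of `v`: `(u, v)` is the last edge of some
`minlevel(v)` path. -/
def IsPred (g : MatchedGraph V) (u v : V) : Prop :=
  ∃ p f, g.IsMinlevelPath p f v ∧ 2 ≤ p.length ∧ p.getD (p.length - 2) f = u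

/-- A prop is an edge which is the last edge of a minlevel path to one of its
endpoints. -/
def IsPropEdge (g : MatchedGraph V) (u v : V) : Prop :=
  g.IsPred u v ∨ g.IsPred v u

/-- A bridge is an edge that is not a prop. -/
def IsBridge (g : MatchedGraph V) (u v : V) : Prop :=
  g.adj u v ∧ ¬ g.IsPropEdge u v

/-- Tenacity of an edge. -/
noncomputable def etenacity (g : MatchedGraph V) (u v : V) : ℕ∞ :=
  if g.M u v then g.oddlevel u + g.oddlevel v + 1
  else g.evenlevel u + g.evenlevel v + 1

/-- The set `B(v)` of all `F(p, v)`: for each `evenlevel(v)` or `oddlevel(v)`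
path `p`, the vertex on `p` farthest from the unmatched endpoint among the
vertices of tenacity greater than `tenacity(v)`. -/
def Bset (g : MatchedGraph V) (v : V) : Set V :=
  {b | ∃ p f i, (g.IsEvenlevelPath p f v ∨ g.IsOddlevelPath p f v) ∧
    i < p.length ∧ b = p.getD i f ∧ g.tenacity v < g.tenacity b ∧
    ∀ k, i < k → k < p.length → g.tenacity (p.getD k f) ≤ g.tenacity v}

/-- `b` is the (unique) base of `v`. -/
def baseOf (g : MatchedGraph V) (v b : V) : Prop := g.Bset v = {b}

/-- Iterated bases: `iterBase k v b` means `b = base^k(v)` (with `base^0(v) = v`). -/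
def iterBase (g : MatchedGraph V) : ℕ → V → V → Prop
  | 0, v, b => v = b
  | k + 1, v, b => ∃ u, g.iterBase k v u ∧ g.baseOf u b

/-- A vertex is outer if `evenlevel(v) < oddlevel(v)`. -/
def IsOuter (g : MatchedGraph V) (v : V) : Prop := g.evenlevel v < g.oddlevel v

/-- A vertex is inner if it is not outer. -/
def IsInner (g : MatchedGraph V) (v : V) : Prop := g.oddlevel v ≤ g.evenlevel v

/-- The set `S_{b,t}` of vertices of tenacity `t` with base `b`. -/
def Sset (g : MatchedGraph V) (t : ℕ) (b : V) : Set V :=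
  {v | g.tenacity v = (t : ℕ∞) ∧ g.baseOf v b}

/-- The blossom `B_{b,t}`, defined recursively. -/
def blossom (g : MatchedGraph V) : ℕ → V → Set V
  | 0, _ => ∅
  | 1, _ => ∅
  | t + 2, b => g.Sset (t + 2) b ∪
      ⋃ v ∈ {v | (v ∈ g.Sset (t + 2) b ∨ v = b) ∧ g.IsOuter v}, blossom g t v

/-- The nesting depth `N(B_{b,t})` of a blossom. -/
noncomputable def ndepth (g : MatchedGraph V) [Fintype V] : ℕ → V → ℕ
  | 0, _ => 0
  | 1, _ => 0
  | t + 2, b =>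
    if (g.Sset (t + 2) b).Nonempty then
      1 + Finset.univ.sup (fun v =>
        if (v ∈ g.Sset (t + 2) b ∨ v = b) ∧ g.IsOuter v then ndepth g t v else 0)
    else ndepth g t b

/-- `evenlevel(b; v)`: minimum even length of an alternating path from `b` to
`v` starting with an unmatched edge. -/
noncomputable def evenlevelFrom (g : MatchedGraph V) (b v : V) : ℕ∞ :=
  sInf {n : ℕ∞ | ∃ p, g.AltPath p b v ∧ Even (p.length - 1) ∧
    n = ((p.length - 1 : ℕ) : ℕ∞)}

/-- `oddlevel(b; v)`: minimum odd length of an alternating path from `b` to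
`v` starting with an unmatched edge. -/
noncomputable def oddlevelFrom (g : MatchedGraph V) (b v : V) : ℕ∞ :=
  sInf {n : ℕ∞ | ∃ p, g.AltPath p b v ∧ Odd (p.length - 1) ∧
    n = ((p.length - 1 : ℕ) : ℕ∞)}

end MatchedGraph

/-! Each vertex `w` of a blossom `B_{b,s}` has a base `c` that is either `b` itself or an
outer vertex of `B_{b,s}`, and an outer vertex `c ∈ B_{b,s}` pulls its whole blossom `B_{c,s'}`
into `B_{b,s}`. Bases being unique, two blossoms containing `w` see the same base chain
above `w`. Tenacity strictly increases along that chain, so it reaches `b₁` or `b₂` after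
finitely many steps, and the base reached first is an outer vertex of the other blossom, or
`b₁ = b₂` and monotonicity in `s` decides. -/

namespace MatchedGraph

variable (g : MatchedGraph V)

theorem baseOf_unique {v b b' : V} (h : g.baseOf v b) (h' : g.baseOf v b') : b = b' :=
  Set.singleton_eq_singleton_iff.mp (h.symm.trans h')

theorem tenacity_lt_of_baseOf {v b : V} (h : g.baseOf v b) : g.tenacity v < g.tenacity b := by
  have hb : b ∈ g.Bset v := h ▸ rfl
  obtain ⟨-, -, -, -, -, -, hlt, -⟩ := hb
  exact hlt

theorem mem_blossom_add_two {s : ℕ} {b w : V} :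
    w ∈ g.blossom (s + 2) b ↔ w ∈ g.Sset (s + 2) b ∨
      ∃ c, (c ∈ g.Sset (s + 2) b ∨ c = b) ∧ g.IsOuter c ∧ w ∈ g.blossom s c := by
  simp [blossom, and_assoc]

theorem Sset_subset_blossom (s : ℕ) (b : V) : g.Sset (s + 2) b ⊆ g.blossom (s + 2) b :=
  fun _ hw => (g.mem_blossom_add_two).mpr (Or.inl hw)

theorem blossom_subset_blossom_add_two {s : ℕ} {b c : V} (hc : c ∈ g.Sset (s + 2) b ∨ c = b)
    (hco : g.IsOuter c) : g.blossom s c ⊆ g.blossom (s + 2) b :=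
  fun _ hw => (g.mem_blossom_add_two).mpr (Or.inr ⟨c, hc, hco, hw⟩)

theorem blossom_mono {b : V} (hb : g.IsOuter b) {s s' : ℕ} (hs : Odd s) (hs' : Odd s')
    (hle : s ≤ s') : g.blossom s b ⊆ g.blossom s' b := by
  obtain ⟨m, rfl⟩ : ∃ m, s' = s + 2 * m := ⟨(s' - s) / 2, by grind⟩
  induction m with
  | zero => rfl
  | succ m ih =>
    exact (ih (by grind) (by omega)).trans (g.blossom_subset_blossom_add_two (Or.inr rfl) hb)

theorem exists_baseOf_of_mem_blossom {s : ℕ} {b w : V} (hw : w ∈ g.blossom s b) :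
    g.tenacity w ≤ s ∧ ∃ c, g.baseOf w c ∧ (c = b ∨ g.IsOuter c ∧ c ∈ g.blossom s b) := by
  induction s using Nat.strong_induction_on generalizing b w with
  | _ s ih =>
  match s, hw with
  | s + 2, hw =>
    rcases (g.mem_blossom_add_two).mp hw with ⟨hten, hbase⟩ | ⟨d, hd, hdo, hwd⟩
    · exact ⟨hten.le, b, hbase, Or.inl rfl⟩
    obtain ⟨hten, c, hbase, hc⟩ := ih s (by omega) hwd
    have hsub := g.blossom_subset_blossom_add_two hd hdo
    refine ⟨hten.trans (by exact_mod_cast (by omega : s ≤ s + 2)), c, hbase, ?_⟩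
    rcases hc with rfl | ⟨hco, hcd⟩
    · rcases hd with hd | rfl
      · exact Or.inr ⟨hdo, g.Sset_subset_blossom s b hd⟩
      · exact Or.inl rfl
    · exact Or.inr ⟨hco, hsub hcd⟩

theorem mem_blossom_of_baseOf {s n : ℕ} {b c x : V} (hs : Odd s)
    (hco : g.IsOuter c) (hc : c ∈ g.blossom s b) (hxc : g.baseOf x c) (hn : Odd n) (hn1 : n ≠ 1)
    (hxn : g.tenacity x = n) : x ∈ g.blossom s b := by
  induction s using Nat.strong_induction_on generalizing b c with
  | _ s ih =>
  match s, hc with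
  | s + 2, hc =>
    rcases (g.mem_blossom_add_two).mp hc with hcS | ⟨d, hd, hdo, hcd⟩
    · have hlt : n < s + 2 := by
        exact_mod_cast hcS.1 ▸ hxn ▸ g.tenacity_lt_of_baseOf hxc
      obtain ⟨m, rfl⟩ : ∃ m, n = m + 2 := ⟨n - 2, by grind⟩
      have hxS : x ∈ g.blossom (m + 2) c := g.Sset_subset_blossom m c ⟨hxn, hxc⟩
      exact g.blossom_subset_blossom_add_two (Or.inl hcS) hco
        (g.blossom_mono hco hn (by grind) (by grind) hxS)
    · exact g.blossom_subset_blossom_add_two hd hdo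
        (ih s (by omega) (by grind) hco hcd hxc)

theorem blossom_subset_blossom_of_mem {s s' : ℕ} {b c : V} (hs : Odd s) (hs' : Odd s')
    (hco : g.IsOuter c) (hc : c ∈ g.blossom s b) :
    g.blossom s' c ⊆ g.blossom s b := by
  induction s' using Nat.strong_induction_on generalizing c with
  | _ s' ih =>
  match s' with
  | 0 | 1 => exact Set.empty_subset _
  | s' + 2 =>
    intro x hx
    rcases (g.mem_blossom_add_two).mp hx with ⟨hxn, hxc⟩ | ⟨d, hd, hdo, hxd⟩
    · exact g.mem_blossom_of_baseOf hs hco hc hxc hs' (by omega) hxn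
    · have hdb : d ∈ g.blossom s b := by
        rcases hd with ⟨hdn, hdc⟩ | rfl
        · exact g.mem_blossom_of_baseOf hs hco hc hdc hs' (by omega) hdn
        · exact hc
      exact ih s' (by omega) (by grind) hdo hdb hxd

theorem blossom_subset_or_subset_of_mem {s₁ s₂ : ℕ} {b₁ b₂ w : V} (hs₁ : Odd s₁) (hs₂ : Odd s₂)
    (hb₁ : g.IsOuter b₁) (hb₂ : g.IsOuter b₂) (hw₁ : w ∈ g.blossom s₁ b₁)
    (hw₂ : w ∈ g.blossom s₂ b₂) :
    g.blossom s₁ b₁ ⊆ g.blossom s₂ b₂ ∨ g.blossom s₂ b₂ ⊆ g.blossom s₁ b₁ := by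
  -- `k` bounds the number of steps up the base chain of `w`: tenacity increases strictly
  -- along it and stays at most `s₁` inside `B_{b₁,s₁}`.
  suffices h : ∀ k : ℕ, ∀ w, w ∈ g.blossom s₁ b₁ → w ∈ g.blossom s₂ b₂ →
      (s₁ : ℕ∞) < g.tenacity w + k →
      g.blossom s₁ b₁ ⊆ g.blossom s₂ b₂ ∨ g.blossom s₂ b₂ ⊆ g.blossom s₁ b₁ from
    h (s₁ + 1) w hw₁ hw₂ (lt_add_of_nonneg_of_lt (zero_le ..) (by exact_mod_cast s₁.lt_succ_self))
  intro k
  induction k with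
  | zero =>
    intro w hw₁ _ hlt
    exact absurd (g.exists_baseOf_of_mem_blossom hw₁).1 (by simpa using hlt)
  | succ k ih =>
    intro w hw₁ hw₂ hlt
    obtain ⟨-, c, hwc, hc₁⟩ := g.exists_baseOf_of_mem_blossom hw₁
    obtain ⟨-, c', hwc', hc₂⟩ := g.exists_baseOf_of_mem_blossom hw₂
    obtain rfl := g.baseOf_unique hwc hwc'
    rcases hc₁ with rfl | ⟨-, hc₁⟩ <;> rcases hc₂ with rfl | ⟨-, hc₂⟩
    · exact le_total s₁ s₂ |>.imp (g.blossom_mono hb₁ hs₁ hs₂) (g.blossom_mono hb₁ hs₂ hs₁)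
    · exact Or.inl (g.blossom_subset_blossom_of_mem hs₂ hs₁ hb₁ hc₂)
    · exact Or.inr (g.blossom_subset_blossom_of_mem hs₁ hs₂ hb₂ hc₁)
    · refine ih c hc₁ hc₂ (hlt.trans_le ?_)
      calc g.tenacity w + ↑(k + 1) = g.tenacity w + 1 + k := by push_cast; ring
        _ ≤ g.tenacity c + k := by
          gcongr
          exact Order.add_one_le_of_lt (g.tenacity_lt_of_baseOf hwc)

end MatchedGraph

theorem blossoms_laminar_general (g : MatchedGraph V)
    (t₁ t₂ : ℕ) (h₁ : Odd t₁) (h₂ : Odd t₂)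
    (b₁ b₂ : V) (ho₁ : g.IsOuter b₁)
    (ho₂ : g.IsOuter b₂) :
    Disjoint (g.blossom t₁ b₁) (g.blossom t₂ b₂) ∨
      g.blossom t₁ b₁ ⊆ g.blossom t₂ b₂ ∨
      g.blossom t₂ b₂ ⊆ g.blossom t₁ b₁ := by
  by_cases hdis : Disjoint (g.blossom t₁ b₁) (g.blossom t₂ b₂)
  · exact Or.inl hdis
  obtain ⟨w, hw₁, hw₂⟩ := Set.not_disjoint_iff.mp hdis
  exact Or.inr (g.blossom_subset_or_subset_of_mem h₁ h₂ ho₁ ho₂ hw₁ hw₂)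

/-- For eligible tenacity `t`, assuming unique bases for vertices
of tenacity at most `t`, the blossoms of tenacity at most `t` form a laminar
family. -/
theorem blossoms_laminar (g : MatchedGraph V) (t : ℕ) (hodd : Odd t)
    (he1 : g.tm ≤ (t : ℕ∞)) (he2 : (t : ℕ∞) < g.lm)
    (hclaim : ∀ w, g.tenacity w ≤ (t : ℕ∞) → ∃ b, g.baseOf w b)
    (t₁ t₂ : ℕ) (h₁ : Odd t₁) (h₂ : Odd t₂) (ht₁ : t₁ ≤ t) (ht₂ : t₂ ≤ t)
    (b₁ b₂ : V) (ho₁ : g.IsOuter b₁) (hb₁ : (t₁ : ℕ∞) < g.tenacity b₁)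
    (ho₂ : g.IsOuter b₂) (hb₂ : (t₂ : ℕ∞) < g.tenacity b₂) :
    Disjoint (g.blossom t₁ b₁) (g.blossom t₂ b₂) ∨
      g.blossom t₁ b₁ ⊆ g.blossom t₂ b₂ ∨
      g.blossom t₂ b₂ ⊆ g.blossom t₁ b₁ :=
  blossoms_laminar_general g t₁ t₂ h₁ h₂ b₁ b₂ ho₁ ho₂
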